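/- For real numbers $a, b$ and $p \ge 2$, the pointwise inequality $(|a|^{p-2}a - |b|^{p-2}b)(a-b) \ge 2^{-(p-2)}|a-b|^p$ holds. -/
import Mathlib

open Real

lemma aux_super {x y q : ℝ} (hx : 0 ≤ x) (hy : 0 ≤ y) (hq : 1 ≤ q) :
    x ^ q + y ^ q ≤ (x + y) ^ q := by
  have h : ((x.toNNReal ^ q + y.toNNReal ^ q : NNReal) : ℝ)
      ≤ (((x.toNNReal + y.toNNReal) ^ q : NNReal) : ℝ) :=
    NNReal.coe_le_coe.2 (NNReal.add_rpow_le_rpow_add _ _ hq)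
  simpa [NNReal.coe_rpow, Real.coe_toNNReal _ hx, Real.coe_toNNReal _ hy] using h

lemma aux_conv {x y q : ℝ} (hx : 0 ≤ x) (hy : 0 ≤ y) (hq : 1 ≤ q) :
    (x + y) ^ q ≤ 2 ^ (q - 1) * (x ^ q + y ^ q) := by
  have h : (((x.toNNReal + y.toNNReal) ^ q : NNReal) : ℝ)
      ≤ (((2 : NNReal) ^ (q - 1) * (x.toNNReal ^ q + y.toNNReal ^ q) : NNReal) : ℝ) :=
    NNReal.coe_le_coe.2 (NNReal.rpow_add_le_mul_rpow_add_rpow _ _ hq)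
  simpa [NNReal.coe_rpow, Real.coe_toNNReal _ hx, Real.coe_toNNReal _ hy] using h

lemma keylem {p a b : ℝ} (hp : 2 ≤ p) (hab : b < a) (hsum : 0 ≤ a + b) :
    2 ^ (2 - p) * (a - b) ^ (p - 1) ≤ |a| ^ (p - 2) * a - |b| ^ (p - 2) * b := by
  have ha : 0 < a := by linarith
  have hq : (1 : ℝ) ≤ p - 1 := by linarith
  have hfa : |a| ^ (p - 2) * a = a ^ (p - 1) := by
    rw [abs_of_pos ha, ← Real.rpow_add_one ha.ne']
    ring_nf
  have h2 : (0:ℝ) < 2 ^ (2 - p) := by positivity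
  rcases le_or_gt 0 b with hb | hb
  · have hfb : |b| ^ (p - 2) * b = b ^ (p - 1) := by
      rcases eq_or_lt_of_le hb with h0 | h0
      · rw [← h0, mul_zero, Real.zero_rpow (by linarith : p - 1 ≠ 0)]
      · rw [abs_of_pos h0, ← Real.rpow_add_one h0.ne']
        ring_nf
    rw [hfa, hfb]
    have hsup := aux_super hb (by linarith : (0:ℝ) ≤ a - b) hq
    rw [show b + (a - b) = a by ring] at hsup
    have h1 : (2:ℝ) ^ (2 - p) ≤ 1 :=
      Real.rpow_le_one_of_one_le_of_nonpos one_le_two (by linarith)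
    have hd : (0:ℝ) ≤ (a - b) ^ (p - 1) := Real.rpow_nonneg (by linarith) _
    nlinarith
  · have hfb : |b| ^ (p - 2) * b = -((-b) ^ (p - 1)) := by
      rw [abs_of_neg hb, show (-b) ^ (p - 2) * b = -((-b) ^ (p - 2) * -b) by ring,
        ← Real.rpow_add_one (by linarith : (-b) ≠ 0)]
      ring_nf
    rw [hfa, hfb]
    have hconv := aux_conv ha.le (by linarith : (0:ℝ) ≤ -b) hq
    rw [show a + -b = a - b by ring, show p - 1 - 1 = p - 2 by ring] at hconv
    have h := mul_le_mul_of_nonneg_left hconv h2.le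
    rw [← mul_assoc, ← Real.rpow_add two_pos, show 2 - p + (p - 2) = 0 by ring,
      Real.rpow_zero, one_mul] at h
    linarith

lemma key2 {p a b : ℝ} (hp : 2 ≤ p) (hab : b < a) :
    (2 : ℝ) ^ (-(p - 2)) * |a - b| ^ p ≤
      (|a| ^ (p - 2) * a - |b| ^ (p - 2) * b) * (a - b) := by
  have hd : (0:ℝ) < a - b := by linarith
  have habs : |a - b| ^ p = (a - b) ^ (p - 1) * (a - b) := by
    rw [abs_of_pos hd, ← Real.rpow_add_one hd.ne']
    ring_nf
  rw [habs, show -(p - 2) = 2 - p by ring, ← mul_assoc]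
  have hkey : 2 ^ (2 - p) * (a - b) ^ (p - 1) ≤ |a| ^ (p - 2) * a - |b| ^ (p - 2) * b := by
    rcases le_or_gt 0 (a + b) with hs | hs
    · exact keylem hp hab hs
    · have h := keylem hp (show -a < -b by linarith) (by linarith)
      rw [show -b - -a = a - b by ring, abs_neg, abs_neg] at h
      nlinarith
  exact mul_le_mul_of_nonneg_right hkey hd.le

/-- Pointwise strong monotonicity of `a ↦ |a|^(p-2) a` on `ℝ`:
for real `a, b` and `p ≥ 2`,
`(|a|^(p-2) a - |b|^(p-2) b)(a - b) ≥ 2^{-(p-2)} |a - b|^p`. -/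
theorem stmt1 (p : ℝ) (hp : 2 ≤ p) (a b : ℝ) :
    (2 : ℝ) ^ (-(p - 2)) * |a - b| ^ p ≤
      (|a| ^ (p - 2) * a - |b| ^ (p - 2) * b) * (a - b) := by
  rcases lt_trichotomy a b with h | h | h
  · have := key2 hp h
    rw [abs_sub_comm] at this
    nlinarith
  · subst h
    simp [Real.zero_rpow (by linarith : p ≠ 0)]
  · exact key2 hp h
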